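/- For every ε, α ∈ (0,1) there exists a constant C = C(ε, α) > 0 such that for every n-player m-action game, every correlated equilibrium x ∈ Δ(A), and every k ≥ C·(m·ln m + ln n), the empirical distribution s^k of k i.i.d. samples from x is an ε-correlated equilibrium with probability greater than 1 − α. -/

import Mathlib

open Finset

open scoped Classical

noncomputable section

/-- `x` is a probability distribution on the finite type `A`. -/
def IsDist {A : Type*} [Fintype A] (x : A → ℝ) : Prop :=
  (∀ a, 0 ≤ x a) ∧ ∑ a, x a = 1

/-- Empirical distribution of `k` sampled elements of `A`. -/
def empJoint {A : Type*} [Fintype A] [DecidableEq A] (k : ℕ) (a : Fin k → A) : A → ℝ :=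
  fun p => ((univ.filter fun t => a t = p).card : ℝ) / k

/-- Probability of the event `E` over `k` i.i.d. samples from the distribution `x`. -/
def PrJoint {A : Type*} [Fintype A] (k : ℕ) (x : A → ℝ) (E : (Fin k → A) → Prop) : ℝ :=
  ∑ a : Fin k → A, if E a then ∏ t, x (a t) else 0

/-- `x ∈ Δ(A)` is an `ε`-coarse correlated equilibrium of the game `u`:
for every player `i` and action `j`, the expected regret for not playing `j`
is at most `ε`. -/
def IsCCE {n m : ℕ} (u : Fin n → (Fin n → Fin m) → ℝ)
    (x : (Fin n → Fin m) → ℝ) (ε : ℝ) : Prop :=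
  ∀ (i : Fin n) (j : Fin m),
    ∑ a : Fin n → Fin m, x a * (u i (Function.update a i j) - u i a) ≤ ε

/-- `x ∈ Δ(A)` is an `ε`-correlated equilibrium of the game `u`:
for every player `i` and deviation map `f : [m] → [m]`, the expected regret is
at most `ε`. -/
def IsCE {n m : ℕ} (u : Fin n → (Fin n → Fin m) → ℝ)
    (x : (Fin n → Fin m) → ℝ) (ε : ℝ) : Prop :=
  ∀ (i : Fin n) (f : Fin m → Fin m),
    ∑ a : Fin n → Fin m, x a * (u i (Function.update a i (f (a i))) - u i a) ≤ ε

/-- A distribution on a finite set is `k`-uniform if every probability is an integer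
multiple of `1/k` (equivalently, it is uniform over a size-`k` multiset). -/
def IsKUniform {A : Type*} [Fintype A] (k : ℕ) (x : A → ℝ) : Prop :=
  ∀ a, ∃ c : ℕ, x a = (c : ℝ) / k

/-
Write `regret u i f a` for the gain of player `i` from applying the deviation `f` at the profile
`a`; it lies in `[-1, 1]`, and `x` is a correlated equilibrium exactly when every regret has
mean `≤ 0` under `x`. The empirical regret of `k` samples is the average of `k` i.i.d. copies,
so by Hoeffding's inequality it exceeds `ε` with probability at most `exp (-k ε² / 2)`. A union
bound over the `n · m^m` pairs `(i, f)` bounds the failure probability by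
`exp (m ln m + ln n - k ε² / 2)`, which is at most `α / 2` once `k ≥ C (m ln m + ln n)`.
For `m = 1` every deviation is the identity and every distribution is a correlated equilibrium.
-/

open Real

section PrJoint

variable {A : Type*} [Fintype A] {k : ℕ} {x : A → ℝ}

theorem prJoint_mono (hx : ∀ a, 0 ≤ x a) {E F : (Fin k → A) → Prop}
    (h : ∀ a, E a → F a) :
    PrJoint k x E ≤ PrJoint k x F := by
  refine sum_le_sum fun a _ => ?_
  by_cases hE : E a
  · simp [hE, h a hE]
  · simp only [hE, if_false]
    split_ifs
    exacts [prod_nonneg fun t _ => hx _, le_rfl]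

theorem prJoint_exists_le_sum {P : Type*} [Fintype P] (hx : ∀ a, 0 ≤ x a)
    (E : P → (Fin k → A) → Prop) :
    PrJoint k x (fun a => ∃ p, E p a) ≤ ∑ p, PrJoint k x (E p) := by
  unfold PrJoint
  rw [sum_comm]
  refine sum_le_sum fun a _ => ?_
  have hterm : ∀ p, 0 ≤ if E p a then ∏ t, x (a t) else 0 := fun p => by
    split_ifs
    exacts [prod_nonneg fun t _ => hx _, le_rfl]
  split_ifs with hE
  · obtain ⟨p, hp⟩ := hE
    simpa [hp] using single_le_sum (fun q _ => hterm q) (mem_univ p)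
  · exact sum_nonneg fun q _ => hterm q

theorem prJoint_add_prJoint_not (hx : ∑ b, x b = 1) (E : (Fin k → A) → Prop) :
    PrJoint k x E + PrJoint k x (fun a => ¬ E a) = 1 := by
  unfold PrJoint
  rw [← sum_add_distrib, ← one_pow k, ← hx, Fintype.sum_pow]
  refine sum_congr rfl fun a _ => ?_
  by_cases hE : E a <;> simp [hE]

theorem prJoint_of_forall (hx : ∑ b, x b = 1) {E : (Fin k → A) → Prop} (h : ∀ a, E a) :
    PrJoint k x E = 1 := by
  simpa [h, PrJoint] using prJoint_add_prJoint_not hx E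

end PrJoint

section Hoeffding

theorem exp_mul_le_cosh_add_mul_sinh {s : ℝ} (hs : s ∈ Set.Icc (-1) 1) (l : ℝ) :
    exp (l * s) ≤ cosh l + s * sinh l := by
  have h := convexOn_exp.2 (Set.mem_univ (-l)) (Set.mem_univ l)
    (by linarith [hs.2] : (0 : ℝ) ≤ (1 - s) / 2)
    (by linarith [hs.1] : (0 : ℝ) ≤ (1 + s) / 2)
    (by ring)
  simp only [smul_eq_mul] at h
  rw [cosh_eq, sinh_eq]
  calc exp (l * s) = exp ((1 - s) / 2 * (-l) + (1 + s) / 2 * l) := by ring_nf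
    _ ≤ (1 - s) / 2 * exp (-l) + (1 + s) / 2 * exp l := h
    _ = (exp l + exp (-l)) / 2 + s * ((exp l - exp (-l)) / 2) := by ring

variable {A : Type*} [Fintype A] {x : A → ℝ} {g : A → ℝ}

theorem sum_mul_exp_le_exp_sq_div_two (hx : IsDist x) (hg : ∀ b, g b ∈ Set.Icc (-1) 1)
    (hmean : ∑ b, x b * g b ≤ 0) {l : ℝ} (hl : 0 ≤ l) :
    ∑ b, x b * exp (l * g b) ≤ exp (l ^ 2 / 2) :=
  calc ∑ b, x b * exp (l * g b)
      ≤ ∑ b, x b * (cosh l + g b * sinh l) :=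
        sum_le_sum fun b _ =>
          mul_le_mul_of_nonneg_left (exp_mul_le_cosh_add_mul_sinh (hg b) l) (hx.1 b)
    _ = cosh l * ∑ b, x b + (∑ b, x b * g b) * sinh l := by
        rw [sum_mul, mul_sum, ← sum_add_distrib]
        exact sum_congr rfl fun b _ => by ring
    _ ≤ cosh l := by
        rw [hx.2, mul_one]
        nlinarith [sinh_nonneg_iff.2 hl]
    _ ≤ exp (l ^ 2 / 2) := cosh_le_exp_half_sq l

theorem prJoint_lt_sum_le_exp_mul_pow (hx : ∀ a, 0 ≤ x a) (k : ℕ) (c : ℝ) {l : ℝ}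
    (hl : 0 ≤ l) :
    PrJoint k x (fun a => c < ∑ t, g (a t)) ≤
      exp (-(l * c)) * (∑ b, x b * exp (l * g b)) ^ k := by
  rw [Fintype.sum_pow, mul_sum]
  refine sum_le_sum fun a _ => ?_
  have hprod :
      ∏ t, (x (a t) * exp (l * g (a t))) = (∏ t, x (a t)) * exp (l * ∑ t, g (a t)) := by
    rw [prod_mul_distrib, ← exp_sum, mul_sum]
  have hw : 0 ≤ ∏ t, x (a t) := prod_nonneg fun t _ => hx _
  rw [hprod]
  split_ifs with hE
  · have h1 : 1 ≤ exp (-(l * c)) * exp (l * ∑ t, g (a t)) := by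
      rw [← exp_add]
      exact one_le_exp (by nlinarith)
    nlinarith
  · positivity

theorem prJoint_mul_lt_sum_le_exp (hx : IsDist x) (hg : ∀ b, g b ∈ Set.Icc (-1) 1)
    (hmean : ∑ b, x b * g b ≤ 0) (k : ℕ) {ε : ℝ} (hε : 0 ≤ ε) :
    PrJoint k x (fun a => k * ε < ∑ t, g (a t)) ≤ exp (-(k * ε ^ 2 / 2)) :=
  calc PrJoint k x (fun a => k * ε < ∑ t, g (a t))
      ≤ exp (-(ε * (k * ε))) * (∑ b, x b * exp (ε * g b)) ^ k :=
        prJoint_lt_sum_le_exp_mul_pow hx.1 k _ hε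
    _ ≤ exp (-(ε * (k * ε))) * exp (ε ^ 2 / 2) ^ k := by
        gcongr
        · exact sum_nonneg fun b _ => mul_nonneg (hx.1 b) (exp_nonneg _)
        · exact sum_mul_exp_le_exp_sq_div_two hx hg hmean hε
    _ = exp (-(k * ε ^ 2 / 2)) := by
        rw [← exp_nat_mul, ← exp_add]
        ring_nf

end Hoeffding

section Game

variable {n m : ℕ}

def regret (u : Fin n → (Fin n → Fin m) → ℝ) (i : Fin n) (f : Fin m → Fin m)
    (a : Fin n → Fin m) : ℝ :=
  u i (Function.update a i (f (a i))) - u i a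

theorem regret_mem_Icc {u : Fin n → (Fin n → Fin m) → ℝ}
    (hu : ∀ i a, 0 ≤ u i a ∧ u i a ≤ 1) (i : Fin n) (f : Fin m → Fin m)
    (a : Fin n → Fin m) :
    regret u i f a ∈ Set.Icc (-1) 1 := by
  have h₁ := hu i (Function.update a i (f (a i)))
  have h₂ := hu i a
  constructor <;> simp only [regret] <;> linarith

theorem sum_empJoint_mul {A : Type*} [Fintype A] [DecidableEq A] (k : ℕ) (a : Fin k → A)
    (g : A → ℝ) : ∑ p, empJoint k a p * g p = (∑ t, g (a t)) / k := by
  rw [← sum_fiberwise' univ a g, sum_div]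
  refine sum_congr rfl fun p _ => ?_
  rw [sum_const, nsmul_eq_mul, empJoint]
  ring

theorem exists_mul_lt_sum_regret_of_not_isCE {u : Fin n → (Fin n → Fin m) → ℝ} {k : ℕ}
    {a : Fin k → Fin n → Fin m} {ε : ℝ} (hε : 0 ≤ ε) (h : ¬ IsCE u (empJoint k a) ε) :
    ∃ q : Fin n × (Fin m → Fin m), k * ε < ∑ t, regret u q.1 q.2 (a t) := by
  simp only [IsCE, not_forall, not_le] at h
  obtain ⟨i, f, hif⟩ := h
  change ε < ∑ p, empJoint k a p * regret u i f p at hif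
  rw [sum_empJoint_mul] at hif
  have hk : (0 : ℝ) < k := by
    rcases (Nat.cast_nonneg k : (0 : ℝ) ≤ k).eq_or_lt with hk | hk
    · rw [← hk, div_zero] at hif
      linarith
    · exact hk
  exact ⟨(i, f), by rwa [lt_div_iff₀ hk, mul_comm] at hif⟩

theorem prJoint_not_isCE_empJoint_le {u : Fin n → (Fin n → Fin m) → ℝ}
    (hu : ∀ i a, 0 ≤ u i a ∧ u i a ≤ 1) {x : (Fin n → Fin m) → ℝ} (hx : IsDist x)
    (hce : IsCE u x 0) (k : ℕ) {ε : ℝ} (hε : 0 ≤ ε) :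
    PrJoint k x (fun a => ¬ IsCE u (empJoint k a) ε) ≤ n * m ^ m * exp (-(k * ε ^ 2 / 2)) :=
  calc PrJoint k x (fun a => ¬ IsCE u (empJoint k a) ε)
      ≤ PrJoint k x (fun a =>
          ∃ q : Fin n × (Fin m → Fin m), k * ε < ∑ t, regret u q.1 q.2 (a t)) :=
        prJoint_mono hx.1 fun _ => exists_mul_lt_sum_regret_of_not_isCE hε
    _ ≤ ∑ q : Fin n × (Fin m → Fin m),
          PrJoint k x (fun a => k * ε < ∑ t, regret u q.1 q.2 (a t)) :=
        prJoint_exists_le_sum hx.1 _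
    _ ≤ ∑ _q : Fin n × (Fin m → Fin m), exp (-(k * ε ^ 2 / 2)) :=
        sum_le_sum fun q _ =>
          prJoint_mul_lt_sum_le_exp hx (regret_mem_Icc hu q.1 q.2) (hce q.1 q.2) k hε
    _ = n * m ^ m * exp (-(k * ε ^ 2 / 2)) := by
        simp [Fintype.card_prod]

theorem isCE_of_le_one (hm : m ≤ 1) (u : Fin n → (Fin n → Fin m) → ℝ)
    (x : (Fin n → Fin m) → ℝ) {ε : ℝ} (hε : 0 ≤ ε) : IsCE u x ε := by
  have : Subsingleton (Fin m) := Fin.subsingleton_iff_le_one.2 hm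
  intro i f
  have hfix : ∀ a : Fin n → Fin m, Function.update a i (f (a i)) = a := fun a => by
    rw [Subsingleton.elim (f (a i)) (a i), Function.update_eq_self]
  simpa [hfix] using hε

end Game

section SampleSize

/- The factor `1 + log (2 / α) / log 2` lets `C (m ln m + ln n) ε² / 2` absorb the additive
`log (2 / α)`, since `m ln m + ln n ≥ log 2` once `m ≥ 2`. -/
def sampleConst (ε α : ℝ) : ℝ := 2 / ε ^ 2 * (1 + log (2 / α) / log 2)

variable {ε α : ℝ}

theorem sampleConst_pos (hε : 0 < ε) (hα : 0 < α) (hα₂ : α < 2) :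
    0 < sampleConst ε α := by
  have : 0 < log (2 / α) := log_pos (by rw [lt_div_iff₀ hα]; linarith)
  unfold sampleConst
  positivity

theorem add_log_two_div_le (hε : 0 < ε) (hα : 0 < α) (hα₂ : α < 2) {L k : ℝ}
    (hL : log 2 ≤ L) (hk : sampleConst ε α * L ≤ k) :
    L + log (2 / α) ≤ k * ε ^ 2 / 2 := by
  have hlog2 : 0 < log 2 := log_pos one_lt_two
  have hlogα : 0 < log (2 / α) := log_pos (by rw [lt_div_iff₀ hα]; linarith)
  have hL' : log (2 / α) ≤ log (2 / α) / log 2 * L := by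
    rw [div_mul_eq_mul_div, le_div_iff₀ hlog2]
    nlinarith
  have hk' : (1 + log (2 / α) / log 2) * L ≤ k * ε ^ 2 / 2 := by
    rw [sampleConst, mul_assoc, div_mul_eq_mul_div, div_le_iff₀ (by positivity)] at hk
    linarith
  linarith

theorem natCast_mul_pow_mul_exp_le (hε : 0 < ε) (hα : 0 < α) (hα₂ : α < 2) {n m : ℕ}
    (hn : 0 < n) (hm : 2 ≤ m) {k : ℝ} (hk : sampleConst ε α * (m * log m + log n) ≤ k) :
    (n : ℝ) * m ^ m * exp (-(k * ε ^ 2 / 2)) ≤ α / 2 := by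
  have hm' : (2 : ℝ) ≤ m := by exact_mod_cast hm
  have hL : log 2 ≤ m * log m + log n := by
    have : log 2 ≤ log m := log_le_log two_pos hm'
    nlinarith [log_nonneg (Nat.one_le_cast.2 hn : (1 : ℝ) ≤ n), log_nonneg one_le_two]
  have hnm : (n : ℝ) * m ^ m = exp (m * log m + log n) := by
    rw [exp_add, exp_log (by positivity), ← log_pow, exp_log (by positivity), mul_comm]
  calc (n : ℝ) * m ^ m * exp (-(k * ε ^ 2 / 2))
      = exp (m * log m + log n - k * ε ^ 2 / 2) := by rw [hnm, ← exp_add, sub_eq_add_neg]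
    _ ≤ exp (-log (2 / α)) :=
        exp_le_exp.2 (by linarith [add_log_two_div_le hε hα hα₂ hL hk])
    _ = α / 2 := by rw [exp_neg, exp_log (by positivity), inv_div]

end SampleSize

/-- For every `ε, α ∈ (0,1)` there is a constant `C = C(ε,α) > 0` such
that for every `n`-player `m`-action game, every correlated equilibrium `x`, and every
`k ≥ C(m ln m + ln n)`, the empirical distribution of `k` i.i.d. samples from `x` is an
`ε`-correlated equilibrium with probability greater than `1 − α`. -/
theorem stmt8 (ε α : ℝ) (hε : 0 < ε ∧ ε < 1) (hα : 0 < α ∧ α < 1) :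
    ∃ C > (0 : ℝ), ∀ (n m : ℕ), 0 < n → 0 < m →
      ∀ u : Fin n → (Fin n → Fin m) → ℝ, (∀ i a, 0 ≤ u i a ∧ u i a ≤ 1) →
      ∀ x : (Fin n → Fin m) → ℝ, IsDist x → IsCE u x 0 →
      ∀ k : ℕ, (k : ℝ) ≥ C * ((m : ℝ) * Real.log m + Real.log n) →
        PrJoint k x (fun a => IsCE u (empJoint k a) ε) > 1 - α := by
  have hα₂ : α < 2 := by linarith [hα.2]
  refine ⟨sampleConst ε α, sampleConst_pos hε.1 hα.1 hα₂, ?_⟩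
  intro n m hn hm u hu x hx hce k hk
  rcases Nat.lt_or_ge m 2 with hm₁ | hm₂
  · rw [prJoint_of_forall hx.2 fun a => isCE_of_le_one (by omega) u _ hε.1.le]
    linarith [hα.1]
  · have hbad := (prJoint_not_isCE_empJoint_le hu hx hce k hε.1.le).trans
      (natCast_mul_pow_mul_exp_le hε.1 hα.1 hα₂ hn hm₂ hk)
    linarith [prJoint_add_prJoint_not hx.2 fun a => IsCE u (empJoint k a) ε, hα.1]
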